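/- arXiv:2506.17883 — 2 statements merged into one kernel-verified Lean document; each statement's English description precedes it below -/
import Mathlib

section
/- If ‖r‖ = 1, then ‖K(r,θ)† K(r,θ) − I‖_F² = 2ⁿ · Σ_{P∈G₂} φ_P(r,θ)², where ‖·‖_F is the Frobenius norm. In particular, if the orthogonality part of the cost satisfies Σ_{P∈G₂} φ_P(r,θ)² ≤ ε/2ⁿ, then ‖K(r,θ)† K(r,θ) − I‖_F ≤ √ε. -/
/-!
The Pauli strings are orthogonal for the trace form, `tr(P_s P_t) = 2ⁿ δ_{st}`, so every matrix `M`
satisfies the Parseval identity `2ⁿ ‖M‖_F² = Σ_s |tr(M P_s)|²`; apply it to `M = K†K − I`.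
Since `P_i P_j` is a phase times a Pauli string, `tr(K†K P)` is a combination of the traces
`tr(P_i P_j P)`, which vanish unless `P_i P_j ∝ P`. Hence `tr(M P) = 0` for non-identity `P ∉ G₂`;
`tr(M) = 2ⁿ(‖r‖² − 1) = 0` because distinct strings are trace-orthogonal; and `tr(M P) = 2ⁿ φ_P`
for `P ∈ G₂`.
-/

open Matrix Complex
open scoped Classical

noncomputable section

/-- Single-qubit Pauli matrices: `0 ↦ I`, `1 ↦ X`, `2 ↦ Y`, `3 ↦ Z`. -/
def pauli1 (a : Fin 4) : Matrix (Fin 2) (Fin 2) ℂ :=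
  if a = 0 then 1
  else if a = 1 then !![0, 1; 1, 0]
  else if a = 2 then !![0, -Complex.I; Complex.I, 0]
  else !![1, 0; 0, -1]

/-- The `n`-qubit Pauli string `σ^{(1)} ⊗ ⋯ ⊗ σ^{(n)}` associated to `s : Fin n → Fin 4`,
realized as a matrix on the `(Fin n → Fin 2)`-indexed space of dimension `2^n`. -/
def pauliOp {n : ℕ} (s : Fin n → Fin 4) :
    Matrix (Fin n → Fin 2) (Fin n → Fin 2) ℂ :=
  Matrix.of fun i j => ∏ k, pauli1 (s k) (i k) (j k)

/-- `G₁`: the off-diagonal Pauli strings (some factor is `X` or `Y`). -/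
def G1 (n : ℕ) : Finset (Fin n → Fin 4) :=
  Finset.univ.filter fun s => ∃ k, s k = 1 ∨ s k = 2

/-- The diagonal Pauli strings (every factor is `I` or `Z`). -/
def DiagStrings (n : ℕ) : Finset (Fin n → Fin 4) :=
  Finset.univ.filter fun s => ∀ k, s k = 0 ∨ s k = 3

variable {n d : ℕ}

/-- `K(r,θ) = Σ_j r_j e^{iθ_j} P_j`. -/
def Kmat (P : Fin d → Fin n → Fin 4) (x : (Fin d → ℝ) × (Fin d → ℝ)) :
    Matrix (Fin n → Fin 2) (Fin n → Fin 2) ℂ :=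
  ∑ j, ((x.1 j : ℂ) * Complex.exp (Complex.I * (x.2 j : ℂ))) • pauliOp (P j)

/-- The cost function `f(r,θ) = Σ_{P ∈ G₁} tr(K(r,θ)† H K(r,θ) P)²` (the traces being real). -/
def costf (H : Matrix (Fin n → Fin 2) (Fin n → Fin 2) ℂ)
    (P : Fin d → Fin n → Fin 4) (x : (Fin d → ℝ) × (Fin d → ℝ)) : ℝ :=
  ∑ Q ∈ G1 n, (((Kmat P x)ᴴ * H * Kmat P x * pauliOp Q).trace.re) ^ 2

/-- `φ_P(r,θ) = 2^{-n} tr(K(r,θ)† K(r,θ) P)` (real). -/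
def phi (P : Fin d → Fin n → Fin 4) (Q : Fin n → Fin 4)
    (x : (Fin d → ℝ) × (Fin d → ℝ)) : ℝ :=
  (1 / 2 ^ n) * ((Kmat P x)ᴴ * Kmat P x * pauliOp Q).trace.re

/-- `G₂`: non-identity Pauli strings `Q` with `P_i P_j ∈ {Q, -Q, iQ, -iQ}` for some `i, j`. -/
def G2 (P : Fin d → Fin n → Fin 4) : Finset (Fin n → Fin 4) :=
  Finset.univ.filter fun Q => Q ≠ (fun _ => 0) ∧ ∃ i j : Fin d, ∃ c : ℂ,
    (c = 1 ∨ c = -1 ∨ c = Complex.I ∨ c = -Complex.I) ∧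
    pauliOp (P i) * pauliOp (P j) = c • pauliOp Q

/-- The total cost function `F = f + Σ_{P ∈ G₂} φ_P²`. -/
def totalF (H : Matrix (Fin n → Fin 2) (Fin n → Fin 2) ℂ)
    (P : Fin d → Fin n → Fin 4) (x : (Fin d → ℝ) × (Fin d → ℝ)) : ℝ :=
  costf H P x + ∑ Q ∈ G2 P, phi P Q x ^ 2

end

/-- With the labels `0, 1, 2, 3` of `I, X, Y, Z`, products of Pauli matrices are labelled by XOR,
up to this phase: `XY = iZ`, `YZ = iX`, `ZX = iY`. -/
def pauli1Phase : Fin 4 → Fin 4 → ℂ :=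
  ![![1, 1, 1, 1], ![1, 1, I, -I], ![1, -I, 1, I], ![1, I, -I, 1]]

lemma pauli1_mul (a b : Fin 4) : pauli1 a * pauli1 b = pauli1Phase a b • pauli1 (a ^^^ b) := by
  fin_cases a <;> fin_cases b <;> ext i j <;> fin_cases i <;> fin_cases j <;>
    simp [pauli1, pauli1Phase, Matrix.mul_apply, Fin.sum_univ_two]

lemma pauli1Phase_self (a : Fin 4) : pauli1Phase a a = 1 := by
  fin_cases a <;> simp [pauli1Phase]

lemma pauli1Phase_pow_four (a b : Fin 4) : pauli1Phase a b ^ 4 = 1 := by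
  fin_cases a <;> fin_cases b <;> simp [pauli1Phase, pow_succ]

lemma pauli1_conjTranspose (a : Fin 4) : (pauli1 a)ᴴ = pauli1 a := by
  fin_cases a <;> ext i j <;> fin_cases i <;> fin_cases j <;> simp [pauli1]

lemma pauli1_trace (a : Fin 4) : (pauli1 a).trace = if a = 0 then 2 else 0 := by
  fin_cases a <;> simp [pauli1, Matrix.trace, Fin.sum_univ_two]

lemma sum_pauli1_apply_mul_pauli1_apply (i j k l : Fin 2) :
    ∑ a : Fin 4, pauli1 a i j * pauli1 a k l = if i = l ∧ j = k then 2 else 0 := by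
  fin_cases i <;> fin_cases j <;> fin_cases k <;> fin_cases l <;>
    simp [Fin.sum_univ_four, pauli1] <;> norm_num

section PauliString

variable {n : ℕ}

def pauliStringMul (s t : Fin n → Fin 4) : Fin n → Fin 4 := fun k => s k ^^^ t k

def pauliStringPhase (s t : Fin n → Fin 4) : ℂ := ∏ k, pauli1Phase (s k) (t k)

lemma pauliStringMul_eq_zero_iff {s t : Fin n → Fin 4} :
    pauliStringMul s t = (fun _ => 0) ↔ s = t := by
  have h : ∀ a b : Fin 4, a ^^^ b = 0 ↔ a = b := by decide
  simp only [pauliStringMul, funext_iff, h]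

lemma pauliStringPhase_self (s : Fin n → Fin 4) : pauliStringPhase s s = 1 := by
  simp [pauliStringPhase, pauli1Phase_self]

lemma pauliStringPhase_pow_four (s t : Fin n → Fin 4) : pauliStringPhase s t ^ 4 = 1 := by
  simp [pauliStringPhase, ← Finset.prod_pow, pauli1Phase_pow_four]

lemma pauliOp_conjTranspose (s : Fin n → Fin 4) : (pauliOp s)ᴴ = pauliOp s := by
  ext i j
  simp only [conjTranspose_apply, pauliOp, of_apply, star_prod]
  refine Finset.prod_congr rfl fun k _ => ?_
  rw [← conjTranspose_apply, pauli1_conjTranspose]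

lemma pauliOp_mul (s t : Fin n → Fin 4) :
    pauliOp s * pauliOp t = pauliStringPhase s t • pauliOp (pauliStringMul s t) := by
  ext i j
  simp only [mul_apply, pauliOp, of_apply, Matrix.smul_apply, smul_eq_mul]
  calc ∑ l : Fin n → Fin 2, (∏ k, pauli1 (s k) (i k) (l k)) * ∏ k, pauli1 (t k) (l k) (j k)
      = ∏ k, ∑ v, pauli1 (s k) (i k) v * pauli1 (t k) v (j k) := by
        simp only [← Finset.prod_mul_distrib]
        rw [Fintype.prod_sum]
    _ = ∏ k, (pauli1 (s k) * pauli1 (t k)) (i k) (j k) := by simp only [mul_apply]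
    _ = pauliStringPhase s t * ∏ k, pauli1 (pauliStringMul s t k) (i k) (j k) := by
        simp only [pauli1_mul, Matrix.smul_apply, smul_eq_mul, Finset.prod_mul_distrib,
          pauliStringPhase, pauliStringMul]

lemma pauliOp_trace (s : Fin n → Fin 4) :
    (pauliOp s).trace = if s = (fun _ => 0) then 2 ^ n else 0 := by
  calc (pauliOp s).trace = ∏ k, (pauli1 (s k)).trace := by
        simp only [Matrix.trace, diag, pauliOp, of_apply]
        rw [Fintype.prod_sum]
    _ = _ := by simp [pauli1_trace, Fintype.prod_ite_zero, funext_iff]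

lemma trace_pauliOp_mul_pauliOp (s t : Fin n → Fin 4) :
    (pauliOp s * pauliOp t).trace = if s = t then 2 ^ n else 0 := by
  rw [pauliOp_mul, trace_smul, pauliOp_trace, smul_eq_mul]
  by_cases h : s = t
  · simp [h, pauliStringMul_eq_zero_iff.mpr, pauliStringPhase_self]
  · simp [h, pauliStringMul_eq_zero_iff]

lemma trace_pauliOp_mul_pauliOp_mul_pauliOp (s t u : Fin n → Fin 4) :
    (pauliOp s * pauliOp t * pauliOp u).trace =
      if pauliStringMul s t = u then pauliStringPhase s t * 2 ^ n else 0 := by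
  rw [pauliOp_mul, smul_mul, trace_smul, trace_pauliOp_mul_pauliOp, smul_eq_mul]
  split_ifs <;> simp

lemma sum_pauliOp_apply_mul_pauliOp_apply (i j k l : Fin n → Fin 2) :
    ∑ s, pauliOp s i j * pauliOp s k l = if i = l ∧ j = k then 2 ^ n else 0 := by
  calc ∑ s, pauliOp s i j * pauliOp s k l
      = ∏ m, ∑ a : Fin 4, pauli1 a (i m) (j m) * pauli1 a (k m) (l m) := by
        simp only [pauliOp, of_apply, ← Finset.prod_mul_distrib]
        rw [Fintype.prod_sum]
    _ = _ := by
        simp [sum_pauli1_apply_mul_pauli1_apply, Fintype.prod_ite_zero, funext_iff, forall_and]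

end PauliString

lemma Matrix.IsHermitian.ofReal_re_trace_mul {m : Type*} [Fintype m] {A B : Matrix m m ℂ}
    (hA : A.IsHermitian) (hB : B.IsHermitian) : (((A * B).trace.re : ℝ) : ℂ) = (A * B).trace := by
  refine Complex.conj_eq_iff_re.mp ?_
  rw [← star_def, ← trace_conjTranspose, conjTranspose_mul, hA.eq, hB.eq, trace_mul_comm]

/-- Parseval's identity for the Pauli basis, which is orthogonal of norm `2ⁿ` for `tr(A† B)`. -/
lemma sum_norm_trace_mul_pauliOp_sq {n : ℕ} (M : Matrix (Fin n → Fin 2) (Fin n → Fin 2) ℂ) :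
    ∑ s, ‖(M * pauliOp s).trace‖ ^ 2 = 2 ^ n * ∑ a, ∑ b, ‖M a b‖ ^ 2 := by
  have htrace : ∀ s, (M * pauliOp s).trace = ∑ a, ∑ b, M a b * pauliOp s b a := fun s => by
    simp [Matrix.trace, mul_apply]
  have hstar : ∀ s, star (M * pauliOp s).trace = ∑ a, ∑ b, star (M a b) * pauliOp s a b :=
    fun s => by
      rw [htrace]
      simp only [star_sum, star_mul', ← conjTranspose_apply (pauliOp s), pauliOp_conjTranspose]
  apply Complex.ofReal_injective
  push_cast
  calc ∑ s : Fin n → Fin 4, ((‖(M * pauliOp s).trace‖ : ℂ)) ^ 2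
      = ∑ s, (M * pauliOp s).trace * star (M * pauliOp s).trace := by
        simp only [star_def, Complex.mul_conj']
    _ = ∑ c : Fin n → Fin 2, ∑ e : Fin n → Fin 2, ∑ a : Fin n → Fin 2, ∑ b : Fin n → Fin 2,
          M a b * star (M c e) * ∑ s, pauliOp s b a * pauliOp s c e := by
        simp only [hstar]
        simp only [htrace, Finset.sum_mul, Finset.mul_sum]
        rw [Finset.sum_comm]
        refine Finset.sum_congr rfl fun c _ => ?_
        rw [Finset.sum_comm]
        refine Finset.sum_congr rfl fun e _ => ?_
        rw [Finset.sum_comm]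
        refine Finset.sum_congr rfl fun a _ => ?_
        rw [Finset.sum_comm]
        refine Finset.sum_congr rfl fun b _ => ?_
        refine Finset.sum_congr rfl fun s _ => ?_
        ring
    _ = ∑ a : Fin n → Fin 2, ∑ b : Fin n → Fin 2, 2 ^ n * (M a b * star (M a b)) := by
        simp [sum_pauliOp_apply_mul_pauliOp_apply, ite_and, mul_comm]
    _ = _ := by
        simp only [Finset.mul_sum, star_def, Complex.mul_conj']

lemma eq_one_or_neg_one_or_I_or_neg_I_of_pow_four_eq_one {c : ℂ} (h : c ^ 4 = 1) :
    c = 1 ∨ c = -1 ∨ c = I ∨ c = -I := by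
  have hfactor : (c - 1) * (c + 1) * (c - I) * (c + I) = 0 := by
    linear_combination h + (1 - c ^ 2) * I_sq
  simp only [mul_eq_zero, sub_eq_zero, add_eq_zero_iff_eq_neg] at hfactor
  tauto

lemma trace_conjTranspose_sum_smul_mul_sum_smul_mul {ι m : Type*} [Fintype ι] [Fintype m]
    (c : ι → ℂ) (A : ι → Matrix m m ℂ) (B : Matrix m m ℂ) :
    ((∑ j, c j • A j)ᴴ * (∑ k, c k • A k) * B).trace =
      ∑ j, ∑ k, star (c j) * c k * ((A j)ᴴ * A k * B).trace := by
  simp only [conjTranspose_sum, conjTranspose_smul, Finset.sum_mul, Finset.mul_sum, smul_mul,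
    Matrix.mul_smul, trace_sum, trace_smul, smul_eq_mul, mul_assoc]
  rw [Finset.sum_comm]
  exact Finset.sum_congr rfl fun _ _ => Finset.sum_congr rfl fun _ _ => mul_left_comm _ _ _

section Kmat

variable {n d : ℕ} (P : Fin d → Fin n → Fin 4) (x : (Fin d → ℝ) × (Fin d → ℝ))

noncomputable def KmatCoeff (j : Fin d) : ℂ := (x.1 j : ℂ) * exp (I * (x.2 j : ℂ))

lemma Kmat_eq_sum : Kmat P x = ∑ j, KmatCoeff x j • pauliOp (P j) := rfl

lemma star_KmatCoeff_mul_self (j : Fin d) :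
    star (KmatCoeff x j) * KmatCoeff x j = ((x.1 j ^ 2 : ℝ) : ℂ) := by
  rw [mul_comm, star_def, Complex.mul_conj', KmatCoeff, norm_mul, mul_comm I, Complex.norm_real,
    Complex.norm_exp_ofReal_mul_I, mul_one, Real.norm_eq_abs, ← Complex.ofReal_pow, sq_abs]

lemma trace_conjTranspose_Kmat_mul_Kmat_mul_pauliOp (Q : Fin n → Fin 4) :
    ((Kmat P x)ᴴ * Kmat P x * pauliOp Q).trace =
      ∑ j, ∑ k, star (KmatCoeff x j) * KmatCoeff x k *
        if pauliStringMul (P j) (P k) = Q then pauliStringPhase (P j) (P k) * 2 ^ n else 0 := by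
  simp only [Kmat_eq_sum, trace_conjTranspose_sum_smul_mul_sum_smul_mul, pauliOp_conjTranspose,
    trace_pauliOp_mul_pauliOp_mul_pauliOp]

lemma trace_conjTranspose_Kmat_mul_Kmat_mul_pauliOp_zero (hP : Function.Injective P) :
    ((Kmat P x)ᴴ * Kmat P x * pauliOp (fun _ => 0)).trace = 2 ^ n * ∑ j, ((x.1 j ^ 2 : ℝ) : ℂ) := by
  simp only [trace_conjTranspose_Kmat_mul_Kmat_mul_pauliOp, pauliStringMul_eq_zero_iff, hP.eq_iff,
    mul_ite, mul_zero, Finset.sum_ite_eq, Finset.mem_univ, if_true, pauliStringPhase_self,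
    ← mul_assoc, star_KmatCoeff_mul_self]
  rw [Finset.mul_sum]
  exact Finset.sum_congr rfl fun j _ => by ring

lemma mem_G2_of_pauliStringMul_eq {Q : Fin n → Fin 4} (hQ : Q ≠ fun _ => 0) {i j : Fin d}
    (h : pauliStringMul (P i) (P j) = Q) : Q ∈ G2 P := by
  refine Finset.mem_filter.mpr ⟨Finset.mem_univ _, hQ, i, j, pauliStringPhase (P i) (P j),
    eq_one_or_neg_one_or_I_or_neg_I_of_pow_four_eq_one (pauliStringPhase_pow_four _ _), ?_⟩
  rw [pauliOp_mul, h]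

lemma trace_conjTranspose_Kmat_mul_Kmat_mul_pauliOp_eq_zero {Q : Fin n → Fin 4}
    (hQ : Q ∉ G2 P) (hQ0 : Q ≠ fun _ => 0) :
    ((Kmat P x)ᴴ * Kmat P x * pauliOp Q).trace = 0 := by
  rw [trace_conjTranspose_Kmat_mul_Kmat_mul_pauliOp]
  refine Finset.sum_eq_zero fun j _ => Finset.sum_eq_zero fun k _ => ?_
  rw [if_neg fun h => hQ (mem_G2_of_pauliStringMul_eq P hQ0 h), mul_zero]

lemma trace_conjTranspose_Kmat_mul_Kmat_sub_one_mul_pauliOp (hP : Function.Injective P)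
    (hx : ∑ j, x.1 j ^ 2 = 1) (Q : Fin n → Fin 4) :
    (((Kmat P x)ᴴ * Kmat P x - 1) * pauliOp Q).trace =
      if Q ∈ G2 P then ((2 ^ n * phi P Q x : ℝ) : ℂ) else 0 := by
  rw [Matrix.sub_mul, Matrix.one_mul, trace_sub, pauliOp_trace]
  by_cases hG : Q ∈ G2 P
  · have hQ0 : Q ≠ fun _ => 0 := (Finset.mem_filter.mp hG).2.1
    have hherm : ((Kmat P x)ᴴ * Kmat P x).IsHermitian := isHermitian_conjTranspose_mul_self _
    rw [if_neg hQ0, if_pos hG, sub_zero,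
      ← hherm.ofReal_re_trace_mul (pauliOp_conjTranspose Q), phi]
    field_simp
  · rw [if_neg hG]
    split_ifs with hQ0
    · rw [hQ0, trace_conjTranspose_Kmat_mul_Kmat_mul_pauliOp_zero P x hP, ← Complex.ofReal_sum, hx]
      simp
    · rw [trace_conjTranspose_Kmat_mul_Kmat_mul_pauliOp_eq_zero P x hG hQ0, sub_zero]

lemma sum_norm_conjTranspose_Kmat_mul_Kmat_sub_one_sq (hP : Function.Injective P)
    (hx : ∑ j, x.1 j ^ 2 = 1) :
    ∑ a, ∑ b, ‖((Kmat P x)ᴴ * Kmat P x - 1) a b‖ ^ 2 = 2 ^ n * ∑ Q ∈ G2 P, phi P Q x ^ 2 := by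
  have h := sum_norm_trace_mul_pauliOp_sq ((Kmat P x)ᴴ * Kmat P x - 1)
  have hnorm : ∀ Q, ‖(((Kmat P x)ᴴ * Kmat P x - 1) * pauliOp Q).trace‖ ^ 2 =
      if Q ∈ G2 P then (2 ^ n) ^ 2 * phi P Q x ^ 2 else 0 := fun Q => by
    rw [trace_conjTranspose_Kmat_mul_Kmat_sub_one_mul_pauliOp P x hP hx]
    split_ifs <;> simp [mul_pow]
  rw [Finset.sum_congr rfl fun Q _ => hnorm Q, Finset.sum_ite_mem, Finset.univ_inter,
    ← Finset.mul_sum] at h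
  refine mul_left_cancel₀ (pow_ne_zero n (two_ne_zero' ℝ)) ?_
  linear_combination -h

end Kmat

theorem statement11_general {n d : ℕ}
    (P : Fin d → Fin n → Fin 4) (hP : Function.Injective P)
    (x : (Fin d → ℝ) × (Fin d → ℝ)) (hx : ∑ j, x.1 j ^ 2 = 1) :
    (∑ i, ∑ j, ‖((Kmat P x)ᴴ * Kmat P x - 1) i j‖ ^ 2) =
      2 ^ n * ∑ Q ∈ G2 P, phi P Q x ^ 2 ∧
    ∀ ε : ℝ, (∑ Q ∈ G2 P, phi P Q x ^ 2) ≤ ε / 2 ^ n →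
      Real.sqrt (∑ i, ∑ j, ‖((Kmat P x)ᴴ * Kmat P x - 1) i j‖ ^ 2) ≤ Real.sqrt ε := by
  have hfrob := sum_norm_conjTranspose_Kmat_mul_Kmat_sub_one_sq P x hP hx
  refine ⟨hfrob, fun ε hε => Real.sqrt_le_sqrt ?_⟩
  rw [hfrob, mul_comm]
  exact (le_div_iff₀ (by positivity)).mp hε

/-- if `‖r‖ = 1`, then `‖K†K − I‖_F² = 2ⁿ Σ_{P∈G₂} φ_P(r,θ)²`; in particular
`Σ_{P∈G₂} φ_P² ≤ ε/2ⁿ` implies `‖K†K − I‖_F ≤ √ε`. -/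
theorem statement11 {n d : ℕ} (hn : 1 ≤ n)
    (P : Fin d → Fin n → Fin 4) (hP : Function.Injective P)
    (x : (Fin d → ℝ) × (Fin d → ℝ)) (hx : ∑ j, x.1 j ^ 2 = 1) :
    (∑ i, ∑ j, ‖((Kmat P x)ᴴ * Kmat P x - 1) i j‖ ^ 2) =
      2 ^ n * ∑ Q ∈ G2 P, phi P Q x ^ 2 ∧
    ∀ ε : ℝ, (∑ Q ∈ G2 P, phi P Q x ^ 2) ≤ ε / 2 ^ n →
      Real.sqrt (∑ i, ∑ j, ‖((Kmat P x)ᴴ * Kmat P x - 1) i j‖ ^ 2) ≤ Real.sqrt ε :=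
  statement11_general P hP x hx
end

section
/- If ‖r‖ = 1, then ‖∇_r F(r,θ)‖ ≥ 4·F(r,θ), where ∇_r F = (∂F/∂r₁, …, ∂F/∂r_d) denotes the gradient of F in the radial variables. -/
open Matrix Complex
open scoped Classical

/-!
The total cost `F` is built from traces of `K† A K Q`, and `K(r, θ)` is linear in `r`, so `F` is
homogeneous of degree 4 in `r`. Euler's identity then gives `⟨r, ∇_r F⟩ = 4 F`, and
Cauchy–Schwarz with `‖r‖ = 1` bounds the left-hand side by `‖∇_r F‖`.
-/

-- The operator norm makes square matrices a normed `ℝ`-algebra, so the product rule applies.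
attribute [local instance] Matrix.linftyOpNormedAddCommGroup Matrix.linftyOpNormedSpace
  Matrix.linftyOpNormedRing Matrix.linftyOpNormedAlgebra

section MatrixCalculus

variable {m E : Type*} [Fintype m] [NormedAddCommGroup E] [NormedSpace ℝ E]
  {A : E → Matrix m m ℂ}

theorem Differentiable.matrix_conjTranspose (hA : Differentiable ℝ A) :
    Differentiable ℝ fun x => (A x)ᴴ :=
  ((Matrix.conjTransposeAddEquiv m m ℂ).toAddMonoidHom.toRealLinearMap
    continuous_id.matrix_conjTranspose).differentiable.comp hA

theorem Differentiable.matrix_trace_re (hA : Differentiable ℝ A) :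
    Differentiable ℝ fun x => (A x).trace.re :=
  (Complex.reLm.comp ((Matrix.traceLinearMap m ℂ ℂ).restrictScalars ℝ)).toContinuousLinearMap
    |>.differentiable.comp hA

end MatrixCalculus

theorem fderiv_apply_fst_eq_of_homogeneous {E F : Type*} [NormedAddCommGroup E]
    [NormedSpace ℝ E] [NormedAddCommGroup F] [NormedSpace ℝ F] {f : E × F → ℝ} {x : E × F}
    {k : ℕ} (hf : DifferentiableAt ℝ f x) (hhom : ∀ t : ℝ, f (t • x.1, x.2) = t ^ k * f x) :
    fderiv ℝ f x (x.1, 0) = k * f x := by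
  have hγ : HasDerivAt (fun t : ℝ => (t • x.1, x.2)) (x.1, 0) 1 := by
    simpa using ((hasDerivAt_id (1 : ℝ)).smul_const x.1).prodMk (hasDerivAt_const (1 : ℝ) x.2)
  have hf' : HasFDerivAt f (fderiv ℝ f x) ((1 : ℝ) • x.1, x.2) := by
    simpa using hf.hasFDerivAt
  have hpow : HasDerivAt (fun t : ℝ => t ^ k * f x) (k * f x) 1 := by
    simpa using (hasDerivAt_pow k (1 : ℝ)).mul_const (f x)
  exact (hf'.comp_hasDerivAt 1 hγ).unique (by simpa only [Function.comp_def, hhom] using hpow)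

theorem ContinuousLinearMap.apply_pi_zero_eq_sum {ι F G : Type*} [Fintype ι] [DecidableEq ι]
    [NormedAddCommGroup F] [NormedSpace ℝ F] [NormedAddCommGroup G] [NormedSpace ℝ G]
    (L : (ι → ℝ) × F →L[ℝ] G) (v : ι → ℝ) :
    L (v, 0) = ∑ j, v j • L (Pi.single j 1, 0) := by
  simpa only [map_sum, map_smul, ContinuousLinearMap.comp_apply, ContinuousLinearMap.inl_apply]
    using congrArg (L.comp (ContinuousLinearMap.inl ℝ (ι → ℝ) F)) (pi_eq_sum_univ' v)

variable {n d : ℕ}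

theorem differentiable_Kmat (P : Fin d → Fin n → Fin 4) : Differentiable ℝ (Kmat P) := by
  unfold Kmat
  fun_prop

theorem differentiable_totalF (H : Matrix (Fin n → Fin 2) (Fin n → Fin 2) ℂ)
    (P : Fin d → Fin n → Fin 4) : Differentiable ℝ (totalF H P) := by
  have hK := differentiable_Kmat P
  have hKs := hK.matrix_conjTranspose
  have hcost : ∀ Q, Differentiable ℝ fun x => ((Kmat P x)ᴴ * H * Kmat P x * pauliOp Q).trace.re :=
    fun Q => (((hKs.mul_const H).mul hK).mul_const _).matrix_trace_re
  have hphi : ∀ Q, Differentiable ℝ fun x => ((Kmat P x)ᴴ * Kmat P x * pauliOp Q).trace.re :=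
    fun Q => ((hKs.mul hK).mul_const _).matrix_trace_re
  exact (Differentiable.fun_sum fun Q _ => (hcost Q).pow 2).add
    (Differentiable.fun_sum fun Q _ => ((hphi Q).const_mul _).pow 2)

theorem Kmat_smul_fst (P : Fin d → Fin n → Fin 4) (x : (Fin d → ℝ) × (Fin d → ℝ)) (t : ℝ) :
    Kmat P (t • x.1, x.2) = t • Kmat P x := by
  simp only [Kmat, Finset.smul_sum, ← smul_assoc, Complex.real_smul, Pi.smul_apply, smul_eq_mul,
    Complex.ofReal_mul, mul_assoc]

theorem totalF_smul_fst (H : Matrix (Fin n → Fin 2) (Fin n → Fin 2) ℂ)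
    (P : Fin d → Fin n → Fin 4) (x : (Fin d → ℝ) × (Fin d → ℝ)) (t : ℝ) :
    totalF H P (t • x.1, x.2) = t ^ 4 * totalF H P x := by
  simp only [totalF, costf, phi, Kmat_smul_fst, conjTranspose_smul, star_trivial, smul_mul_assoc,
    mul_smul_comm, smul_smul, trace_smul, Complex.real_smul, Complex.re_ofReal_mul]
  rw [mul_add, Finset.mul_sum, Finset.mul_sum]
  congr 1 <;> exact Finset.sum_congr rfl fun _ _ => by ring

theorem statement16_general {n d : ℕ}
    (H : Matrix (Fin n → Fin 2) (Fin n → Fin 2) ℂ)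
    (P : Fin d → Fin n → Fin 4)
    (x : (Fin d → ℝ) × (Fin d → ℝ)) (hx : ∑ j, x.1 j ^ 2 = 1) :
    4 * totalF H P x ≤
      Real.sqrt (∑ j, (fderiv ℝ (totalF H P) x (Pi.single j 1, 0)) ^ 2) := by
  have hEuler := fderiv_apply_fst_eq_of_homogeneous (differentiable_totalF H P x)
    (totalF_smul_fst H P x)
  rw [ContinuousLinearMap.apply_pi_zero_eq_sum] at hEuler
  calc 4 * totalF H P x = ∑ j, x.1 j * fderiv ℝ (totalF H P) x (Pi.single j 1, 0) := by
        exact_mod_cast hEuler.symm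
    _ ≤ Real.sqrt (∑ j, x.1 j ^ 2) *
          Real.sqrt (∑ j, (fderiv ℝ (totalF H P) x (Pi.single j 1, 0)) ^ 2) :=
        Real.sum_mul_le_sqrt_mul_sqrt _ _ _
    _ = Real.sqrt (∑ j, (fderiv ℝ (totalF H P) x (Pi.single j 1, 0)) ^ 2) := by
        rw [hx, Real.sqrt_one, one_mul]

/-- if `‖r‖ = 1`, then `‖∇_r F(r,θ)‖ ≥ 4 F(r,θ)`, where the `j`-th component
of `∇_r F` is the partial derivative of `F` in the direction of the `j`-th radial
coordinate. -/
theorem statement16 {n d : ℕ} (hn : 1 ≤ n)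
    (H : Matrix (Fin n → Fin 2) (Fin n → Fin 2) ℂ) (hH : H.IsHermitian)
    (P : Fin d → Fin n → Fin 4) (hP : Function.Injective P)
    (x : (Fin d → ℝ) × (Fin d → ℝ)) (hx : ∑ j, x.1 j ^ 2 = 1) :
    4 * totalF H P x ≤
      Real.sqrt (∑ j, (fderiv ℝ (totalF H P) x (Pi.single j 1, 0)) ^ 2) :=
  statement16_general H P x hx
end
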